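/- Let L/K be a cyclic extension of number fields with Galois group G generated by σ. Then the index of the group of principal fractional ideals of L generated by elements of K^× inside the group of G-invariant principal fractional ideals of L equals (E_L[N] : E_L^{1-σ}): that is, (H_L^G : H̃_K) = (E_L[N] : E_L^{1-σ}). -/

import Mathlib

/-!
Write `δ x = x^{1-σ} = x / σ x` on `Lˣ`, let `U ≤ Lˣ` be the image of `E_L`, `F = Kˣ`, and
`P = δ⁻¹(U)`, the generators of `σ`-invariant principal ideals. Since `(α) ↦ α` identifies
principal ideals with `Lˣ / U`, we get `H_L^G = P / U` and `H̃_K = FU / U`, so the left index is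
`(P : FU)`. On the other side `ker δ = F`, because `σ` generates the Galois group, and
`δ(U) = E_L^{1-σ}`, while Hilbert 90 gives `δ(P) = U ∩ ker N = E_L[N]`; so the right index is
`(δ P : δ U) = (P : U · ker δ) = (P : FU)` as well.
-/

open NumberField
open scoped nonZeroDivisors

def fixedSubgroup {G : Type*} [Group G] (e : G ≃* G) : Subgroup G where
  carrier := {x | e x = x}
  one_mem' := map_one e
  mul_mem' {a b} ha hb := by
    simp only [Set.mem_setOf_eq, map_mul] at *; rw [ha, hb]
  inv_mem' {a} ha := by
    simp only [Set.mem_setOf_eq, map_inv] at *; rw [ha]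

section Hilbert90

variable {K L : Type*} [Field K] [Field L] [Algebra K L]

/-- The map `x ↦ x^{1-σ}` of `E_L^{1-σ}`, on all of `Lˣ`. -/
def unitsOneSubAut (σ : L ≃ₐ[K] L) : Lˣ →* Lˣ :=
  MonoidHom.id Lˣ * (Units.map (σ : L →* L))⁻¹

theorem unitsOneSubAut_apply (σ : L ≃ₐ[K] L) (x : Lˣ) :
    (unitsOneSubAut σ x : L) = x / σ x := by
  simp [unitsOneSubAut, div_eq_mul_inv]

def partialNorm (σ : L ≃ₐ[K] L) (x : Lˣ) (k : ℕ) : Lˣ :=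
  ∏ i ∈ Finset.range k, (σ ^ i) • x

theorem partialNorm_add (σ : L ≃ₐ[K] L) (x : Lˣ) (a b : ℕ) :
    partialNorm σ x (a + b) = partialNorm σ x a * (σ ^ a) • partialNorm σ x b := by
  simp only [partialNorm, Finset.prod_range_add, Finset.smul_prod', smul_smul, pow_add]

variable [FiniteDimensional K L] [IsGalois K L] {σ : L ≃ₐ[K] L}

theorem partialNorm_orderOf (hσ : ∀ τ : L ≃ₐ[K] L, τ ∈ Subgroup.zpowers σ) (x : Lˣ) :
    (partialNorm σ x (orderOf σ) : L) = algebraMap K L (Algebra.norm K (x : L)) := by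
  classical
  rw [Algebra.norm_eq_prod_automorphisms, ← IsCyclic.image_range_orderOf hσ,
    Finset.prod_image fun i hi j hj =>
      pow_injOn_Iio_orderOf (by simpa using hi) (by simpa using hj),
    partialNorm, Units.coe_prod]
  rfl

theorem partialNorm_eq_of_pow_eq (hσ : ∀ τ : L ≃ₐ[K] L, τ ∈ Subgroup.zpowers σ) {x : Lˣ}
    (hx : Algebra.norm K (x : L) = 1) {a b : ℕ} (hab : σ ^ a = σ ^ b) :
    partialNorm σ x a = partialNorm σ x b := by
  have hcycle : partialNorm σ x (orderOf σ) = 1 :=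
    Units.ext (by rw [partialNorm_orderOf hσ, hx, map_one, Units.val_one])
  have hperiod : ∀ k, partialNorm σ x (k + orderOf σ) = partialNorm σ x k := fun k => by
    rw [partialNorm_add, hcycle, smul_one, mul_one]
  have hmod : ∀ k, partialNorm σ x k = partialNorm σ x (k % orderOf σ) := fun k => by
    conv_lhs => rw [← Nat.mod_add_div k (orderOf σ)]
    induction k / orderOf σ with
    | zero => rfl
    | succ q ih => rw [Nat.mul_succ, ← add_assoc, hperiod, ih]
  rw [hmod a, hmod b, pow_eq_pow_iff_modEq.mp hab]

/-- Hilbert 90, from Noether's form: `σ^k ↦ partialNorm σ x k` is a well-defined 1-cocycle. -/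
theorem exists_unitsOneSubAut_eq_of_norm_eq_one
    (hσ : ∀ τ : L ≃ₐ[K] L, τ ∈ Subgroup.zpowers σ) {x : Lˣ} (hx : Algebra.norm K (x : L) = 1) :
    ∃ y : Lˣ, unitsOneSubAut σ y = x := by
  have hexp : ∀ τ : L ≃ₐ[K] L, ∃ k : ℕ, σ ^ k = τ := fun τ =>
    (Submonoid.mem_powers_iff _ _).mp (mem_powers_iff_mem_zpowers.mpr (hσ τ))
  choose exp hexp using hexp
  let f : (L ≃ₐ[K] L) → Lˣ := fun τ => partialNorm σ x (exp τ)
  have hf : groupCohomology.IsMulCocycle₁ f := fun g h => by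
    have : σ ^ exp (g * h) = σ ^ (exp g + exp h) := by rw [hexp, pow_add, hexp, hexp]
    simp only [f, partialNorm_eq_of_pow_eq hσ hx this, partialNorm_add, hexp, mul_comm]
  obtain ⟨β, hβ⟩ := groupCohomology.isMulCoboundary₁_of_isMulCocycle₁_of_aut_to_units f hf
  have hfσ : f σ = x := by
    rw [show f σ = partialNorm σ x 1 from partialNorm_eq_of_pow_eq hσ hx (by rw [hexp, pow_one])]
    simp only [partialNorm, Finset.prod_range_one, pow_zero, one_smul]
  refine ⟨β⁻¹, Units.ext ?_⟩
  have := congrArg Units.val ((hβ σ).trans hfσ)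
  simp only [AlgEquiv.smul_units_def, Units.val_div_eq_div_val, Units.coe_map] at this
  rw [unitsOneSubAut_apply, ← this]
  simp [div_eq_mul_inv, mul_comm]

theorem ker_unitsOneSubAut (hσ : ∀ τ : L ≃ₐ[K] L, τ ∈ Subgroup.zpowers σ) :
    (unitsOneSubAut σ).ker = (Units.map (algebraMap K L).toMonoidHom).range := by
  ext x
  have hfixed : σ (x : L) = x ↔ ∀ τ : L ≃ₐ[K] L, τ (x : L) = x :=
    ⟨fun h τ => Subgroup.zpowers_le (H := MulAction.stabilizer _ (x : L)) |>.mpr h (hσ τ),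
      fun h => h σ⟩
  rw [MonoidHom.mem_ker, Units.ext_iff, unitsOneSubAut_apply, Units.val_one,
    div_eq_one_iff_eq (by simp), eq_comm, hfixed, ← IsGalois.mem_range_algebraMap_iff_fixed]
  constructor
  · rintro ⟨k, hk⟩
    exact ⟨Units.mk0 k (by rintro rfl; exact x.ne_zero (by rw [← hk, map_zero])), Units.ext hk⟩
  · rintro ⟨k, rfl⟩
    exact ⟨k, rfl⟩

theorem range_unitsOneSubAut (hσ : ∀ τ : L ≃ₐ[K] L, τ ∈ Subgroup.zpowers σ) :
    (unitsOneSubAut σ).range = (Units.map (Algebra.norm K : L →* K)).ker := by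
  ext x
  rw [MonoidHom.mem_range, MonoidHom.mem_ker, Units.ext_iff]
  constructor
  · rintro ⟨y, rfl⟩
    rw [Units.coe_map, unitsOneSubAut_apply, div_eq_mul_inv, map_mul, Algebra.norm_inv,
      Algebra.norm_eq_of_algEquiv, mul_inv_cancel₀ (by simp), Units.val_one]
  · exact fun hx => exists_unitsOneSubAut_eq_of_norm_eq_one hσ (by simpa using hx)

end Hilbert90

theorem ker_toPrincipalIdeal (R K : Type*) [CommRing R] [IsDomain R] [Field K] [Algebra R K]
    [IsFractionRing R K] :
    (toPrincipalIdeal R K).ker = (Units.map (algebraMap R K).toMonoidHom).range := by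
  ext x
  rw [MonoidHom.mem_ker, toPrincipalIdeal_eq_iff, Units.val_one,
    ← FractionalIdeal.spanSingleton_one, eq_comm, FractionalIdeal.spanSingleton_eq_spanSingleton]
  simp [Units.ext_iff, Units.smul_def, Algebra.smul_def]

theorem apply_toPrincipalIdeal_of_mem_iff {L : Type*} [Field L] [NumberField L] (e : L ≃+* L)
    (F : (FractionalIdeal (𝓞 L)⁰ L)ˣ ≃* (FractionalIdeal (𝓞 L)⁰ L)ˣ)
    (hF : ∀ (I : (FractionalIdeal (𝓞 L)⁰ L)ˣ) (x : L),
      x ∈ (F I : FractionalIdeal (𝓞 L)⁰ L) ↔ ∃ y ∈ (I : FractionalIdeal (𝓞 L)⁰ L), e y = x)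
    (α : Lˣ) :
    F (toPrincipalIdeal (𝓞 L) L α) = toPrincipalIdeal (𝓞 L) L (Units.map e.toMonoidHom α) := by
  ext x
  rw [hF]
  simp only [coe_toPrincipalIdeal, FractionalIdeal.mem_spanSingleton, Units.coe_map]
  constructor
  · rintro ⟨_, ⟨z, rfl⟩, rfl⟩
    exact ⟨RingOfIntegers.mapRingEquiv e z, by simp [Algebra.smul_def]⟩
  · rintro ⟨z, rfl⟩
    exact ⟨_, ⟨RingOfIntegers.mapRingEquiv e.symm z, rfl⟩, by simp [Algebra.smul_def]⟩

section NumberField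

variable {K L : Type*} [Field K] [Field L] [Algebra K L]

theorem comap_toPrincipalIdeal_fixedSubgroup [NumberField L] (σ : L ≃ₐ[K] L)
    (Fσ : (FractionalIdeal (𝓞 L)⁰ L)ˣ ≃* (FractionalIdeal (𝓞 L)⁰ L)ˣ)
    (hFσ : ∀ (I : (FractionalIdeal (𝓞 L)⁰ L)ˣ) (x : L),
      x ∈ (Fσ I : FractionalIdeal (𝓞 L)⁰ L) ↔ ∃ y ∈ (I : FractionalIdeal (𝓞 L)⁰ L), σ y = x) :
    (fixedSubgroup Fσ).comap (toPrincipalIdeal (𝓞 L) L) =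
      (Units.map (algebraMap (𝓞 L) L).toMonoidHom).range.comap (unitsOneSubAut σ) := by
  ext α
  change Fσ (toPrincipalIdeal (𝓞 L) L α) = _ ↔ _
  rw [apply_toPrincipalIdeal_of_mem_iff σ.toRingEquiv Fσ hFσ, ← ker_toPrincipalIdeal,
    Subgroup.mem_comap, MonoidHom.mem_ker, eq_comm, ← div_eq_one, ← map_div]
  rfl

theorem map_unitsOneSubAut_range_unitsMap [NumberField K] [IsGalois K L] (σ : L ≃ₐ[K] L) :
    (Units.map (algebraMap (𝓞 L) L).toMonoidHom).range.map (unitsOneSubAut σ) =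
      (MonoidHom.id (𝓞 L)ˣ * (Units.map
        (galRestrict (𝓞 K) K L (𝓞 L) σ).toRingEquiv.toMonoidHom)⁻¹).range.map
          (Units.map (algebraMap (𝓞 L) L).toMonoidHom) := by
  rw [MonoidHom.map_range, MonoidHom.map_range]
  congr 1
  ext u
  simp [unitsOneSubAut_apply, div_eq_mul_inv, algebraMap_galRestrict_apply]

variable (K L) in
theorem map_ker_unitsMap_norm :
    (Units.map (RingOfIntegers.norm K : 𝓞 L →* 𝓞 K)).ker.map
        (Units.map (algebraMap (𝓞 L) L).toMonoidHom) =
      (Units.map (algebraMap (𝓞 L) L).toMonoidHom).range ⊓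
        (Units.map (Algebra.norm K : L →* K)).ker := by
  rw [← Subgroup.map_comap_eq]
  congr 1
  ext u
  simp [Units.ext_iff, RingOfIntegers.ext_iff, RingOfIntegers.coe_norm]

end NumberField

theorem index_principal_invariant_eq_index_units_general
    (K L : Type*) [Field K] [Field L] [NumberField K] [NumberField L]
    [Algebra K L] [IsGalois K L]
    (σ : L ≃ₐ[K] L) (hσ : ∀ τ : L ≃ₐ[K] L, τ ∈ Subgroup.zpowers σ)
    (Fσ : (FractionalIdeal (𝓞 L)⁰ L)ˣ ≃* (FractionalIdeal (𝓞 L)⁰ L)ˣ)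
    (hFσ : ∀ (I : (FractionalIdeal (𝓞 L)⁰ L)ˣ) (x : L),
      x ∈ (Fσ I : FractionalIdeal (𝓞 L)⁰ L) ↔
        ∃ y ∈ (I : FractionalIdeal (𝓞 L)⁰ L), σ y = x) :
    Subgroup.relIndex
        (((toPrincipalIdeal (𝓞 L) L).comp (Units.map (algebraMap K L).toMonoidHom)).range)
        ((toPrincipalIdeal (𝓞 L) L).range ⊓ fixedSubgroup Fσ)
      = Subgroup.relIndex
          ((MonoidHom.id (𝓞 L)ˣ *
            (Units.map (galRestrict (𝓞 K) K L (𝓞 L) σ).toRingEquiv.toMonoidHom)⁻¹).range)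
          ((Units.map (RingOfIntegers.norm K : 𝓞 L →* 𝓞 K)).ker) := by
  set π := toPrincipalIdeal (𝓞 L) L
  set ι := Units.map (algebraMap (𝓞 L) L).toMonoidHom
  set δ := unitsOneSubAut σ
  set F := (Units.map (algebraMap K L).toMonoidHom).range
  set P := ι.range.comap δ
  have hkerπ : π.ker = ι.range := ker_toPrincipalIdeal _ _
  have hkerδ : δ.ker = F := ker_unitsOneSubAut hσ
  have hP : (fixedSubgroup Fσ).comap π = P := comap_toPrincipalIdeal_fixedSubgroup σ Fσ hFσ
  have hδU := map_unitsOneSubAut_range_unitsMap σ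
  have hUP : ι.range ≤ P := by
    rw [← Subgroup.map_le_iff_le_comap, hδU]
    exact Subgroup.map_le_range _ _
  have hFP : F ≤ P := by
    rw [← hkerδ, ← MonoidHom.comap_bot]
    exact Subgroup.comap_mono bot_le
  calc Subgroup.relIndex (π.comp _).range (π.range ⊓ fixedSubgroup Fσ)
      = (F.map π).relIndex (P.map π) := by
        rw [MonoidHom.map_range, ← hP, Subgroup.map_comap_eq]
    _ = (F ⊔ ι.range).relIndex P := by
      rw [Subgroup.relIndex_map_map, hkerπ, sup_eq_left.mpr hUP]
    _ = (ι.range.map δ).relIndex (P.map δ) := by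
      rw [Subgroup.relIndex_map_map, hkerδ, sup_comm, sup_eq_left.mpr hFP]
    _ = _ := by
      rw [hδU, Subgroup.map_comap_eq, range_unitsOneSubAut hσ, inf_comm,
        ← map_ker_unitsMap_norm, Subgroup.relIndex_map_map_of_injective _ _
          (Units.map_injective (FaithfulSMul.algebraMap_injective (𝓞 L) L))]

/-- `L/K` is a cyclic extension of number fields with Galois group `G` generated by `σ`,
acting on invertible fractional ideals of `L` via `Fσ` (characterized by `hFσ`).
`H_L^G` is the group of `G`-invariant principal fractional ideals of `L` and `H̃_K` the
group of principal fractional ideals of `L` generated by elements of `K^×`.  Then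
`(H_L^G : H̃_K) = (E_L[N] : E_L^{1-σ})`, where `E_L[N]` is the group of units of `L` of
norm `1` and `E_L^{1-σ}` the group of units of the form `u·σ(u)⁻¹`. -/
theorem index_principal_invariant_eq_index_units
    (K L : Type*) [Field K] [Field L] [NumberField K] [NumberField L]
    [Algebra K L] [IsGalois K L] [FiniteDimensional K L]
    (σ : L ≃ₐ[K] L) (hσ : ∀ τ : L ≃ₐ[K] L, τ ∈ Subgroup.zpowers σ)
    (Fσ : (FractionalIdeal (𝓞 L)⁰ L)ˣ ≃* (FractionalIdeal (𝓞 L)⁰ L)ˣ)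
    (hFσ : ∀ (I : (FractionalIdeal (𝓞 L)⁰ L)ˣ) (x : L),
      x ∈ (Fσ I : FractionalIdeal (𝓞 L)⁰ L) ↔
        ∃ y ∈ (I : FractionalIdeal (𝓞 L)⁰ L), σ y = x) :
    Subgroup.relIndex
        (((toPrincipalIdeal (𝓞 L) L).comp (Units.map (algebraMap K L).toMonoidHom)).range)
        ((toPrincipalIdeal (𝓞 L) L).range ⊓ fixedSubgroup Fσ)
      = Subgroup.relIndex
          ((MonoidHom.id (𝓞 L)ˣ *
            (Units.map (galRestrict (𝓞 K) K L (𝓞 L) σ).toRingEquiv.toMonoidHom)⁻¹).range)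
          ((Units.map (RingOfIntegers.norm K : 𝓞 L →* 𝓞 K)).ker) :=
  index_principal_invariant_eq_index_units_general K L σ hσ Fσ hFσ
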